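/- arXiv:1603.09412 — 2 statements merged into one kernel-verified Lean document; each statement's English description precedes it below -/
import Mathlib

section
/- Let j ≥ 1 and k be integers. Then the Fourier expansion of the eta quotient C_{j,k}(z) in q = e^{2πiz} has the form C_{j,k}(z) = q^j + ∑_{n=j+1}^∞ c_{j,k}(n) q^n; that is, the coefficient of q^n vanishes for all 0 ≤ n < j and the coefficient of q^j equals 1. -/
open Complex UpperHalfPlane Filter

/-- The Dedekind eta function `η(z) = e^{πiz/12} ∏_{n=1}^∞ (1 − e^{2πinz})`. -/
noncomputable def dedekindEta (z : ℂ) : ℂ :=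
  Complex.exp (Real.pi * Complex.I * z / 12) *
    ∏' n : ℕ, (1 - Complex.exp (2 * Real.pi * Complex.I * ((n : ℂ) + 1) * z))

/-- The eta quotient `C_{j,k}(z)` of the paper. -/
noncomputable def Cq (j k : ℤ) (z : ℂ) : ℂ :=
  (dedekindEta (2 * z) ^ 10 * dedekindEta (3 * z) ^ 5 * dedekindEta (4 * z) *
      dedekindEta (6 * z) ^ 2 /
      (dedekindEta z ^ 15 * dedekindEta (12 * z) ^ 3)) *
  (dedekindEta (2 * z) ^ 2 * dedekindEta (3 * z) * dedekindEta (12 * z) ^ 3 /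
      (dedekindEta z ^ 3 * dedekindEta (4 * z) * dedekindEta (6 * z) ^ 2)) ^ j *
  (dedekindEta z ^ 6 * dedekindEta (6 * z) /
      (dedekindEta (2 * z) ^ 3 * dedekindEta (3 * z) ^ 2)) ^ k


/-!
Put `q = e^{2πiz}` and `e = e^{πiz/12}`, so that `q = e^24` and `η(mz) = e^m φ(q^m)`, where
`φ(x) = ∏ (1 - x^(n+1))` is Euler's function, holomorphic and zero-free on the unit disc with
`φ(0) = 1`. The eta quotient is multiplicative in its six η-values; on the prefactors
`e, e^2, e^3, e^4, e^6, e^12` the weights cancel in the first and third factor and give `e^24`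
in the second, so `C_{j,k}(z) = q^j F(q)` with `F` holomorphic on the disc and `F(0) = 1`.
The Taylor series of `F` at `0` is the claimed expansion.
-/

open Metric Nat

noncomputable def eulerFunction (x : ℂ) : ℂ := ∏' n : ℕ, (1 - x ^ (n + 1))

lemma eulerFunction_zero : eulerFunction 0 = 1 := by
  simp [eulerFunction]

lemma eulerFunction_ne_zero {x : ℂ} (hx : ‖x‖ < 1) : eulerFunction x ≠ 0 := by
  refine tprod_one_add_ne_zero_of_summable (f := fun n ↦ -x ^ (n + 1)) (fun n ↦ ?_) ?_
  · rw [← sub_eq_add_neg, sub_ne_zero]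
    refine fun h ↦ (pow_lt_one₀ (norm_nonneg x) hx n.succ_ne_zero).ne ?_
    rw [← norm_pow, ← h, norm_one]
  · simpa [summable_nat_add_iff] using summable_geometric_of_lt_one (norm_nonneg x) hx

lemma differentiableOn_eulerFunction : DifferentiableOn ℂ eulerFunction (ball 0 1) :=
  ModularForm.differentiableOn_tprod_one_sub_pow

lemma dedekindEta_natCast_mul (m : ℕ) (z : ℂ) :
    dedekindEta (m * z) = cexp (Real.pi * Complex.I * z / 12) ^ m *
      eulerFunction (cexp (2 * Real.pi * Complex.I * z) ^ m) := by
  simp only [dedekindEta, eulerFunction, ← Complex.exp_nat_mul]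
  congr 2
  · ring
  · ext n; congr 2; push_cast; ring

-- `Cq j k z` is `cqLaurent j k (η z) (η (2z)) (η (3z)) (η (4z)) (η (6z)) (η (12z))`.
noncomputable def cqLaurent (j k : ℤ) (a₁ a₂ a₃ a₄ a₆ a₁₂ : ℂ) : ℂ :=
  (a₂ ^ 10 * a₃ ^ 5 * a₄ * a₆ ^ 2 / (a₁ ^ 15 * a₁₂ ^ 3)) *
  (a₂ ^ 2 * a₃ * a₁₂ ^ 3 / (a₁ ^ 3 * a₄ * a₆ ^ 2)) ^ j *
  (a₁ ^ 6 * a₆ / (a₂ ^ 3 * a₃ ^ 2)) ^ k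

section cqLaurent

variable (j k : ℤ)

lemma cqLaurent_mul (x₁ x₂ x₃ x₄ x₆ x₁₂ y₁ y₂ y₃ y₄ y₆ y₁₂ : ℂ) :
    cqLaurent j k (x₁ * y₁) (x₂ * y₂) (x₃ * y₃) (x₄ * y₄) (x₆ * y₆) (x₁₂ * y₁₂) =
      cqLaurent j k x₁ x₂ x₃ x₄ x₆ x₁₂ * cqLaurent j k y₁ y₂ y₃ y₄ y₆ y₁₂ := by
  simp only [cqLaurent, mul_pow, mul_zpow, div_eq_mul_inv, mul_inv]
  ring

lemma cqLaurent_pow {e : ℂ} (he : e ≠ 0) :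
    cqLaurent j k e (e ^ 2) (e ^ 3) (e ^ 4) (e ^ 6) (e ^ 12) = (e ^ 24) ^ j := by
  rw [cqLaurent]
  field_simp
  exact one_zpow k

lemma cqLaurent_one : cqLaurent j k 1 1 1 1 1 1 = 1 := by
  simp [cqLaurent]

lemma DifferentiableOn.cqLaurent {s : Set ℂ} {a₁ a₂ a₃ a₄ a₆ a₁₂ : ℂ → ℂ}
    (h₁ : DifferentiableOn ℂ a₁ s) (h₂ : DifferentiableOn ℂ a₂ s) (h₃ : DifferentiableOn ℂ a₃ s)
    (h₄ : DifferentiableOn ℂ a₄ s) (h₆ : DifferentiableOn ℂ a₆ s) (h₁₂ : DifferentiableOn ℂ a₁₂ s)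
    (h₁' : ∀ x ∈ s, a₁ x ≠ 0) (h₂' : ∀ x ∈ s, a₂ x ≠ 0) (h₃' : ∀ x ∈ s, a₃ x ≠ 0)
    (h₄' : ∀ x ∈ s, a₄ x ≠ 0) (h₆' : ∀ x ∈ s, a₆ x ≠ 0) (h₁₂' : ∀ x ∈ s, a₁₂ x ≠ 0) :
    DifferentiableOn ℂ (fun x ↦ cqLaurent j k (a₁ x) (a₂ x) (a₃ x) (a₄ x) (a₆ x) (a₁₂ x)) s := by
  unfold _root_.cqLaurent
  fun_prop (disch := simp_all)

end cqLaurent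

lemma pow_mem_ball_zero_one {x : ℂ} (hx : x ∈ ball 0 1) {m : ℕ} (hm : m ≠ 0) :
    x ^ m ∈ ball (0 : ℂ) 1 := by
  rw [mem_ball_zero_iff] at hx ⊢
  rw [norm_pow]
  exact pow_lt_one₀ (norm_nonneg x) hx hm

lemma differentiableOn_eulerFunction_pow {m : ℕ} (hm : m ≠ 0) :
    DifferentiableOn ℂ (fun x ↦ eulerFunction (x ^ m)) (ball 0 1) :=
  differentiableOn_eulerFunction.comp (differentiableOn_pow m)
    fun _ hx ↦ pow_mem_ball_zero_one hx hm

lemma eulerFunction_pow_ne_zero {m : ℕ} (hm : m ≠ 0) :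
    ∀ x ∈ ball (0 : ℂ) 1, eulerFunction (x ^ m) ≠ 0 :=
  fun _ hx ↦ eulerFunction_ne_zero (mem_ball_zero_iff.mp (pow_mem_ball_zero_one hx hm))

noncomputable def cqSeries (j k : ℤ) (x : ℂ) : ℂ :=
  cqLaurent j k (eulerFunction x) (eulerFunction (x ^ 2)) (eulerFunction (x ^ 3))
    (eulerFunction (x ^ 4)) (eulerFunction (x ^ 6)) (eulerFunction (x ^ 12))

section cqSeries

variable (j k : ℤ)

lemma cqSeries_zero : cqSeries j k 0 = 1 := by
  simp [cqSeries, eulerFunction_zero, cqLaurent_one]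

lemma differentiableOn_cqSeries : DifferentiableOn ℂ (cqSeries j k) (ball 0 1) :=
  differentiableOn_eulerFunction.cqLaurent j k
    (differentiableOn_eulerFunction_pow two_ne_zero)
    (differentiableOn_eulerFunction_pow three_ne_zero)
    (differentiableOn_eulerFunction_pow four_ne_zero)
    (differentiableOn_eulerFunction_pow (by norm_num))
    (differentiableOn_eulerFunction_pow (by norm_num))
    (fun _ hx ↦ eulerFunction_ne_zero (mem_ball_zero_iff.mp hx))
    (eulerFunction_pow_ne_zero two_ne_zero) (eulerFunction_pow_ne_zero three_ne_zero)
    (eulerFunction_pow_ne_zero four_ne_zero) (eulerFunction_pow_ne_zero (by norm_num))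
    (eulerFunction_pow_ne_zero (by norm_num))

lemma Cq_eq_zpow_mul_cqSeries (z : ℂ) :
    Cq j k z = cexp (2 * Real.pi * Complex.I * z) ^ j *
      cqSeries j k (cexp (2 * Real.pi * Complex.I * z)) := by
  set e := cexp (Real.pi * Complex.I * z / 12) with he
  have hq : cexp (2 * Real.pi * Complex.I * z) = e ^ 24 := by
    rw [← Complex.exp_nat_mul]; congr 1; push_cast; ring
  calc Cq j k z = cqLaurent j k (dedekindEta ((1 : ℕ) * z)) (dedekindEta ((2 : ℕ) * z))
        (dedekindEta ((3 : ℕ) * z)) (dedekindEta ((4 : ℕ) * z)) (dedekindEta ((6 : ℕ) * z))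
        (dedekindEta ((12 : ℕ) * z)) := by simp [Cq, cqLaurent]
    _ = cqLaurent j k e (e ^ 2) (e ^ 3) (e ^ 4) (e ^ 6) (e ^ 12) *
        cqSeries j k (e ^ 24) := by
      simp only [dedekindEta_natCast_mul, ← he, cqSeries, ← hq, pow_one, cqLaurent_mul]
    _ = _ := by rw [cqLaurent_pow j k (Complex.exp_ne_zero _), hq]

end cqSeries

lemma HasSum.zpow_mul_eq_add_tsum {K : Type*} [NormedField K] {a : ℕ → K} {q s : K}
    (hq : q ≠ 0) (h : HasSum (fun n ↦ a n * q ^ n) s) (j : ℤ) :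
    q ^ j * s = a 0 * q ^ j + ∑' n : ℕ, a (n + 1) * q ^ (j + 1 + n) := by
  have htail : HasSum (fun n ↦ a (n + 1) * q ^ (n + 1)) (s - a 0) := by
    simpa using (hasSum_nat_add_iff' 1).mpr h
  have hterm (n : ℕ) : q ^ j * (a (n + 1) * q ^ (n + 1)) = a (n + 1) * q ^ (j + 1 + n) := by
    rw [show j + 1 + (n : ℤ) = j + (n + 1 : ℕ) by push_cast; ring, zpow_add₀ hq, zpow_natCast]
    ring
  rw [← tsum_congr hterm, (htail.mul_left (q ^ j)).tsum_eq]
  ring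

theorem Cq_qExpansion_general (j k : ℤ) :
    ∃ c : ℤ → ℂ, ∀ z : UpperHalfPlane,
      Cq j k (z : ℂ) =
        Complex.exp (2 * Real.pi * Complex.I * (z : ℂ)) ^ j +
          ∑' n : ℕ, c (j + 1 + n) *
            Complex.exp (2 * Real.pi * Complex.I * (z : ℂ)) ^ (j + 1 + (n : ℤ)) := by
  set a : ℕ → ℂ := fun n ↦ (n ! : ℂ)⁻¹ * iteratedDeriv n (cqSeries j k) 0
  have ha₀ : a 0 = 1 := by simp [a, cqSeries_zero]
  refine ⟨fun m ↦ a (m - j).toNat, fun z ↦ ?_⟩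
  have hq := mem_ball_zero_iff.mpr (UpperHalfPlane.norm_exp_two_pi_I_lt_one z)
  have hsum : HasSum (fun n ↦ a n * cexp (2 * Real.pi * Complex.I * z) ^ n)
      (cqSeries j k (cexp (2 * Real.pi * Complex.I * z))) := by
    refine (Complex.hasSum_taylorSeries_on_ball (differentiableOn_cqSeries j k) hq).congr_fun
      fun n ↦ ?_
    simp only [a, sub_zero, smul_eq_mul]
    ring
  rw [Cq_eq_zpow_mul_cqSeries, hsum.zpow_mul_eq_add_tsum (Complex.exp_ne_zero _), ha₀, one_mul]
  congr! 4 with n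
  dsimp only
  congr 1
  omega

/-- For `j ≥ 1` the `q`-expansion of `C_{j,k}` has the form
`q^j + ∑_{n ≥ j+1} c_{j,k}(n) q^n`. -/
theorem Cq_qExpansion (j k : ℤ) (hj : 1 ≤ j) :
    ∃ c : ℤ → ℂ, ∀ z : UpperHalfPlane,
      Cq j k (z : ℂ) =
        Complex.exp (2 * Real.pi * Complex.I * (z : ℂ)) ^ j +
          ∑' n : ℕ, c (j + 1 + n) *
            Complex.exp (2 * Real.pi * Complex.I * (z : ℂ)) ^ (j + 1 + (n : ℤ)) :=
  Cq_qExpansion_general j k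
end

section
/- Let k ≥ 2 be an integer. Then the functions C_{1,2k}(z), C_{2,2k}(z), …, C_{4k−5,2k}(z) are linearly independent over ℂ as functions on the upper half plane. -/
open Complex UpperHalfPlane Filter

/-!
Write `q = e^{2πiz}`. As `Im z → ∞` the product in `η` tends to `1`, so `η(nz) ~ q^{n/24}`, and an
eta quotient `∏ η(nz)^{a_n}` is asymptotic to `q^{Σ n a_n / 24}`; for `C_{j,k}` this is `q^j`.
Functions asymptotic to distinct powers of `q` are linearly independent: in a vanishing
combination, the term of lowest order would be `o` of itself.
-/

open Asymptotics Topology Function.Periodic ModularForm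

section LeadingTerms

variable {ι α 𝕜 : Type*} [LinearOrder ι] [NormedField 𝕜] {l : Filter α} {F g : ι → α → 𝕜}

theorem linearIndependent_of_isEquivalent (hF : ∀ i, F i ~[l] g i)
    (hg : ∀ i j, i < j → g j =o[l] g i) (hne : ∀ i, ∃ᶠ x in l, g i x ≠ 0) :
    LinearIndependent 𝕜 F := by
  classical
  rw [linearIndependent_iff']
  intro s c hsum i hi
  by_contra hci
  set t := s.filter (c · ≠ 0)
  have ht : t.Nonempty := ⟨i, Finset.mem_filter.mpr ⟨hi, hci⟩⟩
  set m := t.min' ht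
  have hm : m ∈ t := t.min'_mem ht
  have hsum_t : ∑ j ∈ t, c j • F j = 0 :=
    (Finset.sum_filter_of_ne (p := (c · ≠ 0)) fun j _ h hj => h (by rw [hj, zero_smul])).trans hsum
  have hleading : c m • F m = -∑ j ∈ t.erase m, c j • F j :=
    eq_neg_of_add_eq_zero_left ((Finset.add_sum_erase t (fun j => c j • F j) hm).trans hsum_t)
  have htail : (∑ j ∈ t.erase m, c j • F j) =o[l] g m := by
    refine IsLittleO.sum fun j hj => ?_
    have hmj : m < j := lt_of_le_of_ne (t.min'_le j (Finset.mem_of_mem_erase hj))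
      (Finset.ne_of_mem_erase hj).symm
    exact ((hF j).isBigO.trans_isLittleO (hg m j hmj)).const_smul_left (c j)
  have hFm : F m =o[l] g m := by
    refine (isLittleO_const_smul_left (Finset.mem_filter.mp hm).2).mp ?_
    change (c m • F m) =o[l] g m
    rw [hleading]
    exact htail.neg_left
  exact isLittleO_irrefl (hne m) ((hF m).symm.isBigO.trans_isLittleO hFm)

theorem isLittleO_zpow_zpow_of_lt {q : α → 𝕜} (hq : Tendsto q l (𝓝 0))
    (hq0 : ∀ᶠ x in l, q x ≠ 0) {m n : ℤ} (hmn : m < n) :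
    (fun x => q x ^ n) =o[l] fun x => q x ^ m := by
  obtain ⟨d, rfl⟩ := Int.exists_add_of_le hmn
  have hpow : Tendsto (fun x => q x ^ (d + 1)) l (𝓝 0) := by
    simpa using hq.pow (d + 1)
  refine (isLittleO_iff_tendsto' (hq0.mono fun x hx h => absurd h (zpow_ne_zero m hx))).mpr
    (hpow.congr' (hq0.mono fun x hx => ?_))
  dsimp only
  rw [show m + 1 + (d : ℤ) = m + (d + 1 : ℕ) by push_cast; ring, zpow_add₀ hx,
    mul_div_cancel_left₀ _ (zpow_ne_zero m hx), zpow_natCast]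

theorem linearIndependent_of_isEquivalent_zpow {q : α → 𝕜} (hq : Tendsto q l (𝓝 0))
    (hq0 : ∀ᶠ x in l, q x ≠ 0) [l.NeBot] {e : ι → ℤ} (he : StrictMono e)
    (hF : ∀ i, F i ~[l] fun x => q x ^ e i) : LinearIndependent 𝕜 F :=
  linearIndependent_of_isEquivalent hF
    (fun _ _ hij => isLittleO_zpow_zpow_of_lt hq hq0 (he hij))
    (fun _ => (hq0.mono fun _ hx => zpow_ne_zero _ hx).frequently)

end LeadingTerms

local notation "𝕢" => Function.Periodic.qParam
local notation "I∞" => comap Complex.im atTop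

theorem dedekindEta_eq_eta : dedekindEta = η := by
  funext z
  rw [dedekindEta, ModularForm.eta, qParam]
  congr 1
  · push_cast
    ring_nf
  · exact tprod_congr fun n => by rw [eta_q_eq_cexp]

theorem tendsto_tprod_one_sub_pow_nhds_zero :
    Tendsto (fun q : ℂ => ∏' n : ℕ, (1 - q ^ (n + 1))) (𝓝 0) (𝓝 1) := by
  have hcont := differentiableOn_tprod_one_sub_pow.continuousOn.continuousAt
    (Metric.ball_mem_nhds (0 : ℂ) one_pos)
  simpa using hcont.tendsto

theorem eta_isEquivalent_qParam : η ~[I∞] 𝕢 24 := by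
  have hprod : Tendsto (fun z => ∏' n, (1 - eta_q n z)) I∞ (𝓝 1) :=
    tendsto_tprod_one_sub_pow_nhds_zero.comp
      ((qParam_tendsto one_pos).mono_right nhdsWithin_le_nhds)
  show (𝕢 24 * fun z => ∏' n, (1 - eta_q n z)) ~[I∞] 𝕢 24
  simpa using IsEquivalent.refl.mul ((isEquivalent_const_iff_tendsto one_ne_zero).mpr hprod)

theorem qParam_natCast_mul (h : ℝ) (n : ℕ) (z : ℂ) : 𝕢 h (n * z) = 𝕢 h z ^ n := by
  rw [qParam, qParam, ← Complex.exp_nat_mul]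
  ring_nf

theorem qParam_pow (h : ℝ) (n : ℕ) (z : ℂ) : 𝕢 h z ^ n = 𝕢 (h / n) z := by
  rw [qParam, qParam, ← Complex.exp_nat_mul]
  push_cast
  rw [div_div_eq_mul_div, mul_div_assoc', mul_comm (n : ℂ), mul_div_right_comm]

theorem tendsto_const_mul_comap_im_atTop {c : ℝ} (hc : 0 < c) :
    Tendsto (fun z : ℂ => c * z) I∞ I∞ :=
  tendsto_comap_iff.mpr <| by
    simpa [Function.comp_def] using tendsto_comap.const_mul_atTop hc

theorem dedekindEta_mul_isEquivalent {n : ℕ} (hn : 0 < n) :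
    (fun z => dedekindEta (n * z)) ~[I∞] fun z => 𝕢 24 z ^ n := by
  have := (eta_isEquivalent_qParam.comp_tendsto
    (tendsto_const_mul_comap_im_atTop (Nat.cast_pos.mpr hn)))
  simpa [Function.comp_def, dedekindEta_eq_eta, qParam_natCast_mul] using this

theorem Cq_isEquivalent (j k : ℤ) : Cq j k ~[I∞] fun z => 𝕢 1 z ^ j := by
  have h1 : dedekindEta ~[I∞] 𝕢 24 := dedekindEta_eq_eta ▸ eta_isEquivalent_qParam
  have h2 : (fun z => dedekindEta (2 * z)) ~[I∞] fun z => 𝕢 24 z ^ 2 := by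
    simpa using dedekindEta_mul_isEquivalent two_pos
  have h3 : (fun z => dedekindEta (3 * z)) ~[I∞] fun z => 𝕢 24 z ^ 3 := by
    simpa using dedekindEta_mul_isEquivalent three_pos
  have h4 : (fun z => dedekindEta (4 * z)) ~[I∞] fun z => 𝕢 24 z ^ 4 := by
    simpa using dedekindEta_mul_isEquivalent four_pos
  have h6 : (fun z => dedekindEta (6 * z)) ~[I∞] fun z => 𝕢 24 z ^ 6 := by
    simpa using dedekindEta_mul_isEquivalent (n := 6) (by norm_num)
  have h12 : (fun z => dedekindEta (12 * z)) ~[I∞] fun z => 𝕢 24 z ^ 12 := by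
    simpa using dedekindEta_mul_isEquivalent (n := 12) (by norm_num)
  -- The three factors of `Cq` have orders `0`, `1` and `0` in `q`.
  have key := ((((((h2.pow 10).mul (h3.pow 5)).mul h4).mul (h6.pow 2)).div
      ((h1.pow 15).mul (h12.pow 3))).mul
    (((((h2.pow 2).mul h3).mul (h12.pow 3)).div (((h1.pow 3).mul h4).mul (h6.pow 2))).zpow j)).mul
    ((((h1.pow 6).mul h6).div ((h2.pow 3).mul (h3.pow 2))).zpow k)
  refine (key : Cq j k ~[I∞] _).congr_right (Eventually.of_forall fun z => ?_)
  have hz : 𝕢 24 z ≠ 0 := qParam_ne_zero z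
  simp only [Pi.mul_apply, Pi.div_apply, Pi.pow_apply]
  rw [show 𝕢 1 z = 𝕢 24 z ^ 24 by norm_num [qParam_pow]]
  generalize 𝕢 24 z = w at hz ⊢
  simp only [← pow_mul, ← pow_add]
  norm_num [hz]
  rw [div_eq_of_eq_mul (pow_ne_zero _ hz) (pow_add w 24 19)]

theorem Cq_linearIndependent_general (k : ℕ) :
    LinearIndependent ℂ (fun j : Fin (4 * k - 5) =>
      (fun z : UpperHalfPlane => Cq ((j : ℕ) + 1) (2 * (k : ℤ)) (z : ℂ))) :=
  linearIndependent_of_isEquivalent_zpow (l := atImInfty)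
    (qParam_tendsto_atImInfty one_pos)
    (Eventually.of_forall fun _ => qParam_ne_zero _)
    (e := fun j => (j : ℕ) + 1) (fun _ _ hij => by simpa using hij)
    fun j => (Cq_isEquivalent _ _).comp_tendsto tendsto_coe_atImInfty

/-- For `k ≥ 2` the functions `C_{1,2k}, …, C_{4k−5,2k}` on the upper half plane are
linearly independent over `ℂ`. -/
theorem Cq_linearIndependent (k : ℕ) (hk : 2 ≤ k) :
    LinearIndependent ℂ (fun j : Fin (4 * k - 5) =>
      (fun z : UpperHalfPlane => Cq ((j : ℕ) + 1) (2 * (k : ℤ)) (z : ℂ))) :=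
  Cq_linearIndependent_general k
end
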